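/- For B = K[Z_n] with twist J = Σ_k e_k ⊗ x^k, the element J' = (e₁ ⊗ e₂)(J) = Σ_{k=0}^{n-1} (e_k ⊗ 1) ⊗ (1 ⊗ x^k) is a twist for the bialgebra B ⊗ B, i.e., (Δ_{B⊗B} ⊗ id)(J')(J' ⊗ 1) = (id ⊗ Δ_{B⊗B})(J')(1 ⊗ J'). -/

import Mathlib

set_option linter.unusedSectionVars false
set_option synthInstance.maxHeartbeats 1000000

open MonoidAlgebra Finset
open scoped TensorProduct

noncomputable section

variable (K : Type*) [CommRing K] (G : Type*) [CommGroup G]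

namespace GroupBialgebra

instance instCoalgebra : Coalgebra K (MonoidAlgebra K G) :=
  MonoidAlgebra.instCoalgebra K K G

variable {K G}

lemma comul_single (g : G) (c : K) :
    Coalgebra.comul (R := K) (MonoidAlgebra.single g c) =
      MonoidAlgebra.single g (1 : K) ⊗ₜ[K] MonoidAlgebra.single g c := by
  have h := MonoidAlgebra.comul_single (R := K) g c
  simp only [CommSemiring.comul_apply, TensorProduct.map_tmul, MonoidAlgebra.lsingle_apply] at h
  exact h

lemma counit_single (g : G) (c : K) :
    Coalgebra.counit (R := K) (MonoidAlgebra.single g c) = c := by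
  have h := MonoidAlgebra.counit_single (R := K) g c
  simp only [CommSemiring.counit_apply] at h
  exact h

variable (K G)

instance instBialgebra : Bialgebra K (MonoidAlgebra K G) :=
  MonoidAlgebra.instBialgebra K K G

end GroupBialgebra

end

noncomputable section

/-- The group algebra `K[Z_n]` of the cyclic group of order `n`. -/
abbrev GroupAlgZn (K : Type*) [CommRing K] (n : ℕ) : Type _ :=
  MonoidAlgebra K (Multiplicative (ZMod n))

/-- The canonical generator `x` of the group algebra `K[Z_n]`. -/
def xgen (K : Type*) [CommRing K] (n : ℕ) : GroupAlgZn K n :=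
  MonoidAlgebra.of K (Multiplicative (ZMod n)) (Multiplicative.ofAdd (1 : ZMod n))

/-- The idempotent `e_k = (1/n) ∑_{i=0}^{n-1} q^{-ik} x^i` in `K[Z_n]`. -/
def eIdem (K : Type*) [Field K] (n : ℕ) (q : K) (k : ZMod n) : GroupAlgZn K n :=
  (n : K)⁻¹ • ∑ i ∈ Finset.range n, (q ^ (i * k.val))⁻¹ • (xgen K n) ^ i

/-- `J ∈ R ⊗ R` is a twist for the bialgebra `R`: it is invertible, satisfies the twist
(2-cocycle) equation `(Δ ⊗ id)(J)(J ⊗ 1) = (id ⊗ Δ)(J)(1 ⊗ J)`, and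
`(ε ⊗ id)(J) = 1 = (id ⊗ ε)(J)`. -/
def IsTwist (K : Type*) [CommRing K] (R : Type*) [Ring R] [Bialgebra K R]
    (J : R ⊗[K] R) : Prop :=
  IsUnit J ∧
  (TensorProduct.assoc K R R R)
      ((LinearMap.rTensor R (Coalgebra.comul (R := K))) J * (J ⊗ₜ[K] (1 : R))) =
    (LinearMap.lTensor R (Coalgebra.comul (R := K))) J * ((1 : R) ⊗ₜ[K] J) ∧
  (TensorProduct.lid K R) ((LinearMap.rTensor R (Coalgebra.counit (R := K))) J) = 1 ∧
  (TensorProduct.rid K R) ((LinearMap.lTensor R (Coalgebra.counit (R := K))) J) = 1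

open TensorProduct

/-! In the group-like basis, `J' = n⁻¹ ∑_{a,b ∈ ℤ/n} q^{-ab} (x^a ⊗ 1) ⊗ (1 ⊗ x^b)`: a twist
`∑ ψ(ab) φ₁(a) ⊗ φ₂(b)` built from a bicharacter of a finite ring and two families of
commuting group-like elements. For any such twist both sides of the cocycle equation expand to
`∑ ψ(ab) ψ(uv)`-weighted sums over `A⁴`, which agree after the substitution
`(a, b, u, v) ↦ (a + u, v, a, b - v)`. Orthogonality `∑_a ψ(ab) = |A| δ_{b,0}` of a primitive
character gives the counit conditions, and shows that the twist built from `ψ⁻¹` is an inverse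
up to the factor `|A|²`. -/

lemma IsGroupLikeElem.tmul {R A B : Type*} [CommRing R] [AddCommGroup A] [Module R A]
    [Coalgebra R A] [AddCommGroup B] [Module R B] [Coalgebra R B] {a : A} {b : B}
    (ha : IsGroupLikeElem R a) (hb : IsGroupLikeElem R b) : IsGroupLikeElem R (a ⊗ₜ[R] b) where
  counit_eq_one := by simp [ha.counit_eq_one, hb.counit_eq_one]
  comul_eq_tmul_self := by
    rw [comul_tmul, ha.comul_eq_tmul_self, hb.comul_eq_tmul_self]
    rfl

def IsTwistCocycle (K : Type*) [CommRing K] (R : Type*) [Ring R] [Bialgebra K R]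
    (J : R ⊗[K] R) : Prop :=
  TensorProduct.assoc K R R R (LinearMap.rTensor R (Coalgebra.comul (R := K)) J * (J ⊗ₜ[K] (1 : R))) =
    LinearMap.lTensor R (Coalgebra.comul (R := K)) J * ((1 : R) ⊗ₜ[K] J)

lemma IsTwistCocycle.smul {K R : Type*} [CommRing K] [Ring R] [Bialgebra K R] {J : R ⊗[K] R}
    (hJ : IsTwistCocycle K R J) (r : K) : IsTwistCocycle K R (r • J) := by
  unfold IsTwistCocycle at *
  rw [map_smul, map_smul, ← smul_tmul', tmul_smul, smul_mul_smul_comm, smul_mul_smul_comm,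
    map_smul, hJ]

namespace AddChar.IsPrimitive
variable {K A : Type*} [CommRing K] [IsDomain K] [CommRing A] [Fintype A] [DecidableEq A]
  {ψ : AddChar A K}

theorem sum_mul_right (hψ : ψ.IsPrimitive) (b : A) :
    ∑ a, ψ (a * b) = if b = 0 then (Fintype.card A : K) else 0 := by
  exact_mod_cast AddChar.sum_mulShift b hψ

theorem sum_mul_left (hψ : ψ.IsPrimitive) (a : A) :
    ∑ b, ψ (a * b) = if a = 0 then (Fintype.card A : K) else 0 := by
  simp_rw [mul_comm a]
  exact hψ.sum_mul_right a

end AddChar.IsPrimitive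

section BicharTwist
variable {K H A : Type*} [CommRing K] [CommRing H] [Bialgebra K H] [CommRing A] [Fintype A]
  {ψ : AddChar A K} {φ₁ φ₂ : AddChar A H}

def bicharTwist (ψ : AddChar A K) (φ₁ φ₂ : AddChar A H) : H ⊗[K] H :=
  ∑ a, ∑ b, ψ (a * b) • (φ₁ a ⊗ₜ[K] φ₂ b)

theorem isTwistCocycle_bicharTwist (h₁ : ∀ a, IsGroupLikeElem K (φ₁ a))
    (h₂ : ∀ b, IsGroupLikeElem K (φ₂ b)) : IsTwistCocycle K H (bicharTwist ψ φ₁ φ₂) := by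
  simp only [IsTwistCocycle, bicharTwist, map_sum, map_smul, LinearMap.rTensor_tmul,
    LinearMap.lTensor_tmul, (h₁ _).comul_eq_tmul_self, (h₂ _).comul_eq_tmul_self,
    sum_tmul, tmul_sum, ← smul_tmul', tmul_smul, sum_mul, mul_sum, smul_mul_smul_comm,
    Algebra.TensorProduct.tmul_mul_tmul, mul_one, assoc_tmul, ← AddChar.map_add_eq_mul]
  simp only [← Fintype.sum_prod_type']
  refine Fintype.sum_equiv
    { toFun := fun ⟨u, v, a, b⟩ => (a, b - v, a + u, v)
      invFun := fun ⟨u, v, a, b⟩ => (a - u, b, u, v + b)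
      left_inv := fun ⟨u, v, a, b⟩ => by simp
      right_inv := fun ⟨u, v, a, b⟩ => by simp } _ _ fun ⟨u, v, a, b⟩ => ?_
  simp only [Equiv.coe_fn_mk, add_sub_cancel, mul_comm (φ₂ _)]
  congr 2
  ring

variable [IsDomain K] [DecidableEq A]

theorem lid_rTensor_counit_bicharTwist (hψ : ψ.IsPrimitive)
    (h₁ : ∀ a, IsGroupLikeElem K (φ₁ a)) :
    TensorProduct.lid K H (LinearMap.rTensor H (Coalgebra.counit (R := K)) (bicharTwist ψ φ₁ φ₂)) =
      (Fintype.card A : K) • 1 := by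
  simp only [bicharTwist, map_sum, map_smul, LinearMap.rTensor_tmul, (h₁ _).counit_eq_one,
    lid_tmul, one_smul]
  rw [sum_comm]
  simp only [← sum_smul, hψ.sum_mul_right, ite_smul, zero_smul, sum_ite_eq', mem_univ, if_true,
    AddChar.map_zero_eq_one]

theorem rid_lTensor_counit_bicharTwist (hψ : ψ.IsPrimitive)
    (h₂ : ∀ b, IsGroupLikeElem K (φ₂ b)) :
    TensorProduct.rid K H (LinearMap.lTensor H (Coalgebra.counit (R := K)) (bicharTwist ψ φ₁ φ₂)) =
      (Fintype.card A : K) • 1 := by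
  simp only [bicharTwist, map_sum, map_smul, LinearMap.lTensor_tmul, (h₂ _).counit_eq_one,
    rid_tmul, one_smul]
  simp only [← sum_smul, hψ.sum_mul_left, ite_smul, zero_smul, sum_ite_eq', mem_univ, if_true,
    AddChar.map_zero_eq_one]

theorem bicharTwist_mul_bicharTwist_inv (hψ : ψ.IsPrimitive) :
    bicharTwist ψ φ₁ φ₂ * bicharTwist ψ⁻¹ φ₁ φ₂ = (Fintype.card A : K) ^ 2 • 1 := by
  have expand : bicharTwist ψ φ₁ φ₂ * bicharTwist ψ⁻¹ φ₁ φ₂ =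
      ∑ s, ∑ t, (ψ (-(s * t)) * (∑ a, ψ (a * t)) * ∑ b, ψ (s * b)) • (φ₁ s ⊗ₜ[K] φ₂ t) := by
    simp only [bicharTwist, sum_mul, mul_sum, smul_mul_smul_comm,
      Algebra.TensorProduct.tmul_mul_tmul, sum_smul, AddChar.inv_apply,
      ← AddChar.map_add_eq_mul]
    simp only [← Fintype.sum_prod_type']
    refine Fintype.sum_equiv
      { toFun := fun ⟨u, v, a, b⟩ => (a + u, b + v, b, a)
        invFun := fun ⟨s, t, b, a⟩ => (s - a, t - b, a, b)
        left_inv := fun ⟨u, v, a, b⟩ => by simp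
        right_inv := fun ⟨s, t, b, a⟩ => by simp } _ _ fun ⟨u, v, a, b⟩ => ?_
    simp only [Equiv.coe_fn_mk]
    congr 2
    ring
  rw [expand]
  simp [hψ.sum_mul_right, hψ.sum_mul_left, Algebra.TensorProduct.one_def, sq]

end BicharTwist

theorem isTwist_inv_card_smul_bicharTwist {K H A : Type*} [Field K] [CommRing H] [Bialgebra K H]
    [CommRing A] [Fintype A] [DecidableEq A] {ψ : AddChar A K} {φ₁ φ₂ : AddChar A H}
    (hA : (Fintype.card A : K) ≠ 0) (hψ : ψ.IsPrimitive)
    (h₁ : ∀ a, IsGroupLikeElem K (φ₁ a)) (h₂ : ∀ b, IsGroupLikeElem K (φ₂ b)) :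
    IsTwist K H ((Fintype.card A : K)⁻¹ • bicharTwist ψ φ₁ φ₂) := by
  refine ⟨IsUnit.of_mul_eq_one ((Fintype.card A : K)⁻¹ • bicharTwist ψ⁻¹ φ₁ φ₂) ?_,
    (isTwistCocycle_bicharTwist h₁ h₂).smul _, ?_, ?_⟩
  · rw [smul_mul_smul_comm, bicharTwist_mul_bicharTwist_inv hψ, smul_smul, ← pow_two, ← mul_pow,
      inv_mul_cancel₀ hA, one_pow, one_smul]
  · rw [map_smul, map_smul, lid_rTensor_counit_bicharTwist hψ h₁, smul_smul,
      inv_mul_cancel₀ hA, one_smul]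
  · rw [map_smul, map_smul, rid_lTensor_counit_bicharTwist hψ h₂, smul_smul,
      inv_mul_cancel₀ hA, one_smul]

theorem Finset.sum_range_natCast_zmod {M : Type*} [AddCommMonoid M] (n : ℕ) [NeZero n]
    (f : ZMod n → M) : ∑ i ∈ range n, f i = ∑ a, f a :=
  sum_nbij' (↑) ZMod.val (fun _ _ => mem_univ _) (fun a _ => mem_range.2 (ZMod.val_lt a))
    (fun _ hi => ZMod.val_cast_of_lt (mem_range.1 hi)) (fun a _ => ZMod.natCast_zmod_val a)
    (fun _ _ => rfl)

section CyclicGroupAlgebra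
variable (K : Type*) [Field K] (n : ℕ)

def zmodOf : AddChar (ZMod n) (GroupAlgZn K n) :=
  AddChar.toMonoidHomEquiv.symm (MonoidAlgebra.of K (Multiplicative (ZMod n)))

def zmodOfLeft : AddChar (ZMod n) (GroupAlgZn K n ⊗[K] GroupAlgZn K n) :=
  (Algebra.TensorProduct.includeLeft : GroupAlgZn K n →ₐ[K] _).toMonoidHom.compAddChar
    (zmodOf K n)

def zmodOfRight : AddChar (ZMod n) (GroupAlgZn K n ⊗[K] GroupAlgZn K n) :=
  (Algebra.TensorProduct.includeRight : GroupAlgZn K n →ₐ[K] _).toMonoidHom.compAddChar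
    (zmodOf K n)

theorem isGroupLikeElem_zmodOfLeft (a : ZMod n) : IsGroupLikeElem K (zmodOfLeft K n a) :=
  (MonoidAlgebra.isGroupLikeElem_of _).tmul .one

theorem isGroupLikeElem_zmodOfRight (a : ZMod n) : IsGroupLikeElem K (zmodOfRight K n a) :=
  IsGroupLikeElem.one.tmul (MonoidAlgebra.isGroupLikeElem_of _)

theorem xgen_pow (i : ℕ) : xgen K n ^ i = zmodOf K n i := by
  rw [← nsmul_one, AddChar.map_nsmul_eq_pow]
  rfl

variable {K n} [NeZero n] {q : K}

theorem eIdem_eq_sum_zmodChar (hq : q⁻¹ ^ n = 1) (k : ZMod n) :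
    eIdem K n q k = (n : K)⁻¹ • ∑ a, AddChar.zmodChar n hq (a * k) • zmodOf K n a := by
  rw [eIdem, ← sum_range_natCast_zmod]
  congr 1
  refine sum_congr rfl fun i _ => ?_
  rw [xgen_pow, ← ZMod.natCast_zmod_val k, ← Nat.cast_mul, AddChar.zmodChar_apply', inv_pow,
    ZMod.natCast_zmod_val]

theorem map_includeLeft_includeRight_eq_bicharTwist (hq : q⁻¹ ^ n = 1) :
    TensorProduct.map
        (Algebra.TensorProduct.includeLeft : GroupAlgZn K n →ₐ[K] _).toLinearMap
        (Algebra.TensorProduct.includeRight : GroupAlgZn K n →ₐ[K] _).toLinearMap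
        (∑ k ∈ range n, eIdem K n q k ⊗ₜ[K] (xgen K n ^ k)) =
      (n : K)⁻¹ • bicharTwist (AddChar.zmodChar n hq) (zmodOfLeft K n) (zmodOfRight K n) := by
  simp only [xgen_pow]
  rw [sum_range_natCast_zmod n (fun k => eIdem K n q k ⊗ₜ[K] zmodOf K n k), bicharTwist,
    sum_comm]
  simp only [eIdem_eq_sum_zmodChar hq, sum_tmul, smul_tmul', map_sum, map_smul, map_tmul,
    smul_sum]
  rfl

end CyclicGroupAlgebra

/-- `J' = (e₁ ⊗ e₂)(J) = ∑_k (e_k ⊗ 1) ⊗ (1 ⊗ x^k)` is a twist for the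
bialgebra `B ⊗ B`, where `B = K[Z_n]`. -/
theorem J'_isTwist_for_BtensorB (K : Type u) [Field K] [CharZero K] (n : ℕ) (hn : 2 ≤ n)
    (q : K) (hq : IsPrimitiveRoot q n) :
    let B := GroupAlgZn K n
    let J : B ⊗[K] B :=
      ∑ k ∈ Finset.range n, (eIdem K n q ((k : ℕ) : ZMod n)) ⊗ₜ[K] ((xgen K n) ^ k)
    let J' : (B ⊗[K] B) ⊗[K] (B ⊗[K] B) :=
      (TensorProduct.map (Algebra.TensorProduct.includeLeft : B →ₐ[K] B ⊗[K] B).toLinearMap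
        (Algebra.TensorProduct.includeRight : B →ₐ[K] B ⊗[K] B).toLinearMap) J
    IsTwist K (B ⊗[K] B) J' := by
  intro B J J'
  have : NeZero n := ⟨by omega⟩
  have hJ' : J' = (Fintype.card (ZMod n) : K)⁻¹ •
      bicharTwist (AddChar.zmodChar n hq.inv.pow_eq_one) (zmodOfLeft K n) (zmodOfRight K n) := by
    rw [ZMod.card]
    exact map_includeLeft_includeRight_eq_bicharTwist hq.inv.pow_eq_one
  rw [hJ']
  exact isTwist_inv_card_smul_bicharTwist (by rw [ZMod.card]; exact Nat.cast_ne_zero.2 (by omega))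
    (AddChar.zmodChar_primitive_of_primitive_root n hq.inv) (isGroupLikeElem_zmodOfLeft K n)
    (isGroupLikeElem_zmodOfRight K n)
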